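/- arXiv:1606.03371 — 5 statements merged into one kernel-verified Lean document; each statement's English description precedes it below -/
import Mathlib

section
/- Let (𝔰_j)_{j=−1}^ℓ be a real sequence with 𝔰_{−1} ≠ 0, set l = 1/𝔰_{−1} and n = ⌊ℓ/2⌋, and let (s_j)_{j=0}^ℓ be the unique reals satisfying the Toeplitz matrix equation T(𝔰_{−1}, …, 𝔰_ℓ) · T(l, −s_0, …, −s_ℓ) = I_{ℓ+2}. Set S_p^+ = (s_{i+j+1})_{i,j=0}^{p−1} and 𝒮_p^− = (𝔰_{i+j−1})_{i,j=0}^{p−1}. Then for p = 1, …, n: ν_0(S_p^+) = ν_0(𝒮_{p+1}^−); ν_−(S_p^+) = ν_−(𝒮_{p+1}^−) if 𝔰_{−1} > 0; and ν_−(S_p^+) = ν_−(𝒮_{p+1}^−) − 1 if 𝔰_{−1} < 0. -/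
open Filter Polynomial Matrix Complex Finset

noncomputable section

/-- Upper triangular Toeplitz matrix `T(c_0,…,c_{n-1})`. -/
def toeplitzU {n : ℕ} (c : Fin n → ℝ) : Matrix (Fin n) (Fin n) ℝ :=
  Matrix.of fun i j =>
    if (i : ℕ) ≤ (j : ℕ) then c ⟨(j : ℕ) - (i : ℕ), lt_of_le_of_lt (Nat.sub_le _ _) j.isLt⟩
    else 0

/-- Hankel matrix `S_n = (s_{i+j})_{i,j=0}^{n-1}`. -/
def hankelM (s : ℕ → ℝ) (n : ℕ) : Matrix (Fin n) (Fin n) ℝ :=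
  Matrix.of fun i j => s ((i : ℕ) + (j : ℕ))

/-- Shifted Hankel matrix `S_n^+ = (s_{i+j+1})_{i,j=0}^{n-1}`. -/
def hankelMp (s : ℕ → ℝ) (n : ℕ) : Matrix (Fin n) (Fin n) ℝ :=
  Matrix.of fun i j => s ((i : ℕ) + (j : ℕ) + 1)

/-- Number of negative eigenvalues (with multiplicity), as roots of the char. polynomial. -/
def nuNeg {n : ℕ} (A : Matrix (Fin n) (Fin n) ℝ) : ℕ :=
  Multiset.card (A.charpoly.roots.filter (fun x => x < 0))

def nuZero {n : ℕ} (A : Matrix (Fin n) (Fin n) ℝ) : ℕ :=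
  Multiset.card (A.charpoly.roots.filter (fun x => x = 0))

/-!
Let `g = (l, -s₀, -s₁, …)`. The hypothesis says that `g` is the inverse of `frak` as a power
series up to order `L`, i.e. `T(g) = T(frak)⁻¹`. Expanding the convolution `frak * g = 1` gives the
congruence `𝒮_{p+1}^- = T(frak)ᵀ · (l ⊕ S_p^+) · T(frak)` of `(p+1)×(p+1)` matrices, so by
Sylvester's law of inertia `𝒮_{p+1}^-` and `l ⊕ S_p^+` have the same numbers of negative and of
zero eigenvalues. The extra eigenvalue `l` is nonzero and has the sign of `𝔰_{-1}`, since
`𝔰_{-1} l = 1`.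
-/

open QuadraticMap

section Inertia

variable {ι : Type*} [Fintype ι]

lemma Matrix.IsHermitian.transpose_mul_mul {A : Matrix ι ι ℝ} (hA : A.IsHermitian)
    (P : Matrix ι ι ℝ) : (Pᵀ * A * P).IsHermitian := by
  simpa using isHermitian_conjTranspose_mul_mul P hA

variable [DecidableEq ι]

lemma Matrix.toQuadraticForm'_apply {R : Type*} [CommRing R] (A : Matrix ι ι R) (x : ι → R) :
    A.toQuadraticForm' x = x ⬝ᵥ A *ᵥ x := by
  simp [Matrix.toQuadraticForm', toLinearMap₂'_apply']

lemma Matrix.toQuadraticForm'_transpose_mul_mul {R : Type*} [CommRing R] (A P : Matrix ι ι R) :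
    (Pᵀ * A * P).toQuadraticForm' = A.toQuadraticForm'.comp (Matrix.toLin' P) := by
  ext x
  simp [Matrix.toQuadraticForm'_apply, ← mulVec_mulVec, dotProduct_mulVec, vecMul_transpose]

lemma Matrix.toQuadraticForm'_diagonal {R : Type*} [CommRing R] (w : ι → R) :
    (diagonal w).toQuadraticForm' = weightedSumSquares R w := by
  ext x
  simp [Matrix.toQuadraticForm'_apply, dotProduct, mulVec_diagonal, mul_left_comm]

lemma Matrix.equivalent_toQuadraticForm'_transpose_mul_mul {R : Type*} [CommRing R]
    (A : Matrix ι ι R) {P : Matrix ι ι R} (hP : IsUnit P.det) :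
    (Pᵀ * A * P).toQuadraticForm'.Equivalent A.toQuadraticForm' := by
  rw [Matrix.toQuadraticForm'_transpose_mul_mul]
  exact ⟨(isometryEquivOfCompLinearEquiv A.toQuadraticForm'
    (P.toLinearEquiv' (P.invertibleOfIsUnitDet hP))).symm⟩

lemma Matrix.IsHermitian.sigNeg_toQuadraticForm' {A : Matrix ι ι ℝ} (hA : A.IsHermitian) :
    sigNeg A.toQuadraticForm' = {i | hA.eigenvalues i < 0}.ncard := by
  set U : Matrix ι ι ℝ := (hA.eigenvectorUnitary : Matrix ι ι ℝ)
  have hdiag : Uᵀ * A * U = diagonal hA.eigenvalues := by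
    simpa [Unitary.conjStarAlgAut_apply, star_eq_conjTranspose, U] using
      hA.conjStarAlgAut_star_eigenvectorUnitary
  have hU : IsUnit U.det := isUnit_det_of_right_inverse (Unitary.coe_mul_star_self _)
  rw [← (A.equivalent_toQuadraticForm'_transpose_mul_mul hU).sigNeg_eq, hdiag,
    Matrix.toQuadraticForm'_diagonal]
  exact QuadraticForm.sigNeg_of_equiv_weightedSumSquares (.refl _)

end Inertia

section Counts

variable {n : ℕ} {A : Matrix (Fin n) (Fin n) ℝ}

lemma Matrix.IsHermitian.card_filter_roots_charpoly (hA : A.IsHermitian) (q : ℝ → Prop)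
    [DecidablePred q] : (A.charpoly.roots.filter q).card = #{i | q (hA.eigenvalues i)} := by
  rw [hA.roots_charpoly_eq_eigenvalues, Multiset.filter_map, Multiset.card_map, Finset.card,
    Finset.filter_val]
  rfl

lemma nuNeg_eq_sigNeg (hA : A.IsHermitian) : nuNeg A = sigNeg A.toQuadraticForm' := by
  rw [nuNeg, hA.card_filter_roots_charpoly, hA.sigNeg_toQuadraticForm', ← Set.ncard_coe_finset,
    Finset.coe_filter]
  simp

lemma nuZero_add_rank (hA : A.IsHermitian) : nuZero A + A.rank = n := by
  rw [nuZero, hA.card_filter_roots_charpoly, hA.rank_eq_card_non_zero_eigs, Fintype.card_subtype,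
    Finset.card_filter_add_card_filter_not, Finset.card_univ, Fintype.card_fin]

lemma nuNeg_transpose_mul_mul (hA : A.IsHermitian) {P : Matrix (Fin n) (Fin n) ℝ}
    (hP : IsUnit P.det) : nuNeg (Pᵀ * A * P) = nuNeg A := by
  rw [nuNeg_eq_sigNeg (hA.transpose_mul_mul P), nuNeg_eq_sigNeg hA]
  exact (A.equivalent_toQuadraticForm'_transpose_mul_mul hP).sigNeg_eq

lemma nuZero_transpose_mul_mul (hA : A.IsHermitian) {P : Matrix (Fin n) (Fin n) ℝ}
    (hP : IsUnit P.det) : nuZero (Pᵀ * A * P) = nuZero A := by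
  have hrank : (Pᵀ * A * P).rank = A.rank := by
    rw [rank_mul_eq_left_of_isUnit_det P _ hP,
      rank_mul_eq_right_of_isUnit_det Pᵀ A (by rwa [det_transpose])]
  have := nuZero_add_rank hA
  have := nuZero_add_rank (hA.transpose_mul_mul P)
  omega

end Counts

lemma Fin.sum_ite_val_le {M : Type*} [AddCommMonoid M] {n a : ℕ} (ha : a < n) (h : ℕ → M) :
    ∑ i : Fin n, (if (i : ℕ) ≤ a then h i else 0) = ∑ k ∈ range (a + 1), h k := by
  rw [Fin.sum_univ_eq_sum_range (fun k => if k ≤ a then h k else 0), ← Finset.sum_filter]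
  congr 1
  ext k
  simp only [mem_filter, mem_range]
  omega

section Toeplitz

variable {n : ℕ}

lemma toeplitzU_mul_toeplitzU (c d : ℕ → ℝ) :
    toeplitzU (fun k : Fin n => c k) * toeplitzU (fun k : Fin n => d k) =
      toeplitzU (fun k : Fin n => ∑ t ∈ range (k + 1), c t * d (k - t)) := by
  ext i j
  simp only [mul_apply, toeplitzU, of_apply, ite_mul, zero_mul, mul_ite, mul_zero]
  rw [Fin.sum_ite_val_le j.isLt (fun k => if (i : ℕ) ≤ k then c (k - i) * d (j - k) else 0)]
  split_ifs with hij
  · obtain ⟨t, ht⟩ := Nat.exists_eq_add_of_le hij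
    rw [ht, show (i : ℕ) + t + 1 = i + (t + 1) by omega, sum_range_add,
      sum_eq_zero fun k hk => if_neg (by rw [mem_range] at hk; omega), zero_add]
    refine sum_congr (by simp) fun u _ => ?_
    rw [if_pos (by omega)]
    congr 2 <;> omega
  · exact sum_eq_zero fun k hk => if_neg (by rw [mem_range] at hk; omega)

lemma toeplitzU_eq_one_iff (e : ℕ → ℝ) :
    toeplitzU (fun k : Fin n => e k) = 1 ↔ ∀ m < n, e m = if m = 0 then 1 else 0 := by
  constructor
  · intro h m hm
    have h0m := congr_fun₂ h ⟨0, by omega⟩ ⟨m, hm⟩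
    simp only [toeplitzU, of_apply, one_apply, Fin.ext_iff, Nat.zero_le, if_true,
      Nat.sub_zero] at h0m
    simpa [eq_comm] using h0m
  · intro h
    ext i j
    simp only [toeplitzU, of_apply, one_apply, Fin.ext_iff]
    by_cases hij : (i : ℕ) ≤ j
    · rw [if_pos hij, h _ (by omega)]
      simp only [show (j : ℕ) - i = 0 ↔ (i : ℕ) = j by omega]
    · rw [if_neg hij, if_neg (by omega)]

lemma toeplitzU_mul_toeplitzU_eq_one_iff (c d : ℕ → ℝ) :
    toeplitzU (fun k : Fin n => c k) * toeplitzU (fun k : Fin n => d k) = 1 ↔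
      ∀ m < n, ∑ t ∈ range (m + 1), c t * d (m - t) = if m = 0 then 1 else 0 := by
  rw [toeplitzU_mul_toeplitzU]
  exact toeplitzU_eq_one_iff fun m => ∑ t ∈ range (m + 1), c t * d (m - t)

end Toeplitz

lemma Matrix.charpoly_eq_X_sub_C_mul_of_forall_succ_zero {R : Type*} [CommRing R] {n : ℕ}
    (M : Matrix (Fin (n + 1)) (Fin (n + 1)) R) (h : ∀ i : Fin n, M i.succ 0 = 0) :
    M.charpoly = (X - C (M 0 0)) * (M.submatrix Fin.succ Fin.succ).charpoly := by
  have hsub : (charmatrix M).submatrix Fin.succ Fin.succ =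
      charmatrix (M.submatrix Fin.succ Fin.succ) := by
    ext i j
    simp [charmatrix_apply, diagonal_apply]
  rw [charpoly, det_succ_column_zero, Fin.sum_univ_succ,
    sum_eq_zero fun i _ => by rw [charmatrix_apply_ne _ _ _ (Fin.succ_ne_zero i), h]; simp]
  simp [charmatrix_apply_eq, hsub, charpoly]

section BorderedHankel

def borderedHankelEntry (l : ℝ) (s : ℕ → ℝ) : ℕ → ℕ → ℝ
  | 0, 0 => l
  | 0, _ + 1 => 0
  | _ + 1, 0 => 0
  | i + 1, j + 1 => s (i + j + 1)

def borderedHankel (l : ℝ) (s : ℕ → ℝ) (p : ℕ) : Matrix (Fin (p + 1)) (Fin (p + 1)) ℝ :=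
  Matrix.of fun i j => borderedHankelEntry l s i j

variable (l : ℝ) (s : ℕ → ℝ) (p : ℕ)

lemma borderedHankelEntry_comm (i j : ℕ) :
    borderedHankelEntry l s i j = borderedHankelEntry l s j i := by
  cases i <;> cases j <;> simp only [borderedHankelEntry, Nat.add_comm]

lemma isHermitian_borderedHankel : (borderedHankel l s p).IsHermitian := by
  ext i j
  exact borderedHankelEntry_comm l s j i

lemma roots_charpoly_borderedHankel :
    (borderedHankel l s p).charpoly.roots = l ::ₘ (hankelMp s p).charpoly.roots := by
  rw [charpoly_eq_X_sub_C_mul_of_forall_succ_zero _ fun _ => rfl,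
    roots_mul (mul_ne_zero (X_sub_C_ne_zero _) (charpoly_monic _).ne_zero), roots_X_sub_C]
  rfl

lemma nuNeg_borderedHankel :
    nuNeg (borderedHankel l s p) = nuNeg (hankelMp s p) + if l < 0 then 1 else 0 := by
  rw [nuNeg, nuNeg, roots_charpoly_borderedHankel, Multiset.filter_cons]
  split_ifs <;> simp [add_comm]

lemma nuZero_borderedHankel (hl : l ≠ 0) :
    nuZero (borderedHankel l s p) = nuZero (hankelMp s p) := by
  rw [nuZero, nuZero, roots_charpoly_borderedHankel, Multiset.filter_cons, if_neg hl, zero_add]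

end BorderedHankel

section Congruence

variable {f g : ℕ → ℝ} {p : ℕ}

lemma sum_mul_borderedHankelEntry {a j : ℕ}
    (hfg : ∑ k ∈ range (a + j + 1), f k * g (a + j - k) = if a + j = 0 then 1 else 0) :
    ∑ i ∈ range (a + 1), f (a - i) * borderedHankelEntry (g 0) (fun k => -g (k + 1)) i j =
      ∑ m ∈ range (j + 1), f (a + m) * g (j - m) := by
  -- for `j > 0` the two sides differ by the coefficient `(f * g)_{a+j} = 0`, split at `k = a`
  rw [sum_range_succ']
  cases j with
  | zero => simp [borderedHankelEntry]
  | succ j =>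
    rw [if_neg (by omega), show a + (j + 1) + 1 = a + (j + 2) by omega, sum_range_add] at hfg
    have hhead : ∑ k ∈ range a, f k * g (a + (j + 1) - k) =
        ∑ i ∈ range a, f (a - (i + 1)) * g (i + j + 2) := by
      rw [← sum_range_reflect]
      refine sum_congr rfl fun i hi => ?_
      rw [mem_range] at hi
      congr 2 <;> omega
    simp only [Nat.add_sub_add_left] at hfg
    simp only [borderedHankelEntry, mul_zero, add_zero, mul_neg, sum_neg_distrib]
    linear_combination -hfg + hhead

lemma transpose_toeplitzU_mul_borderedHankel
    (hfg : ∀ m ≤ 2 * p, ∑ k ∈ range (m + 1), f k * g (m - k) = if m = 0 then 1 else 0) :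
    (toeplitzU fun k : Fin (p + 1) => f k)ᵀ * borderedHankel (g 0) (fun k => -g (k + 1)) p =
      hankelM f (p + 1) * toeplitzU fun k : Fin (p + 1) => g k := by
  ext a j
  simp only [mul_apply, transpose_apply, toeplitzU, hankelM, borderedHankel, of_apply, ite_mul,
    zero_mul, mul_ite, mul_zero]
  rw [Fin.sum_ite_val_le a.isLt
      (fun i => f (a - i) * borderedHankelEntry (g 0) (fun k => -g (k + 1)) i j),
    Fin.sum_ite_val_le j.isLt (fun m => f (a + m) * g (j - m))]
  exact sum_mul_borderedHankelEntry (hfg _ (by omega))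

lemma exists_hankelM_eq_transpose_mul_borderedHankel_mul
    (hfg : ∀ m ≤ 2 * p, ∑ k ∈ range (m + 1), f k * g (m - k) = if m = 0 then 1 else 0) :
    ∃ P : Matrix (Fin (p + 1)) (Fin (p + 1)) ℝ, IsUnit P.det ∧
      hankelM f (p + 1) = Pᵀ * borderedHankel (g 0) (fun k => -g (k + 1)) p * P := by
  have hFG :
      (toeplitzU fun k : Fin (p + 1) => f k) * (toeplitzU fun k : Fin (p + 1) => g k) = 1 :=
    (toeplitzU_mul_toeplitzU_eq_one_iff f g).2 fun m hm => hfg m (by omega)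
  refine ⟨_, isUnit_det_of_right_inverse hFG, ?_⟩
  rw [transpose_toeplitzU_mul_borderedHankel hfg, mul_assoc, mul_eq_one_comm.1 hFG, mul_one]

end Congruence

/-- The sequence `𝔰_{-1}, 𝔰_0, …, 𝔰_ℓ` is encoded by `frak i = 𝔰_{i-1}` and `L = ℓ + 2`, so that
`n = ⌊ℓ/2⌋ = (L-2)/2` and `𝒮_{p+1}^- = hankelM frak (p+1)`. -/
theorem index_identities_splus_of_toeplitz_general
    (L : ℕ) (frak : ℕ → ℝ)
    (l : ℝ)
    (s : ℕ → ℝ)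
    (hTop : toeplitzU (fun i : Fin L => frak (i : ℕ)) *
      toeplitzU (fun i : Fin L => if (i : ℕ) = 0 then l else -s ((i : ℕ) - 1)) = 1) :
    ∀ p : ℕ, 1 ≤ p → p ≤ (L - 2) / 2 →
      nuZero (hankelMp s p) = nuZero (hankelM frak (p + 1)) ∧
      (0 < frak 0 → nuNeg (hankelMp s p) = nuNeg (hankelM frak (p + 1))) ∧
      (frak 0 < 0 → nuNeg (hankelMp s p) + 1 = nuNeg (hankelM frak (p + 1))) := by
  intro p hp₁ hp₂
  set g : ℕ → ℝ := fun k => if k = 0 then l else -s (k - 1)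
  have hconv := (toeplitzU_mul_toeplitzU_eq_one_iff frak g).1 hTop
  have hl : frak 0 * l = 1 := by simpa [g] using hconv 0 (by omega)
  obtain ⟨P, hP, hH⟩ := exists_hankelM_eq_transpose_mul_borderedHankel_mul (p := p)
    fun m hm => hconv m (by omega)
  simp only [g, if_pos, Nat.add_one_ne_zero, if_false, Nat.add_sub_cancel, neg_neg] at hH
  have hNeg : nuNeg (hankelM frak (p + 1)) = nuNeg (hankelMp s p) + if l < 0 then 1 else 0 := by
    rw [hH, nuNeg_transpose_mul_mul (isHermitian_borderedHankel l s p) hP, nuNeg_borderedHankel]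
  refine ⟨?_, fun h => ?_, fun h => ?_⟩
  · rw [hH, nuZero_transpose_mul_mul (isHermitian_borderedHankel l s p) hP,
      nuZero_borderedHankel l s p (right_ne_zero_of_mul_eq_one hl)]
  · rw [hNeg, if_neg (pos_of_mul_pos_right (hl ▸ one_pos) h.le).not_gt, add_zero]
  · rw [hNeg, if_pos (neg_of_mul_pos_right (hl ▸ one_pos) h.le)]

/-- Corollary 3.6.  Here the sequence `𝔰_{-1}, 𝔰_0, …, 𝔰_ℓ` is encoded by `frak : ℕ → ℝ`
with `frak i = 𝔰_{i-1}`, of total length `L = ℓ + 2 ≥ 2`; `n = ⌊ℓ/2⌋ = (L-2)/2`, and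
`𝒮_{p+1}^- = (𝔰_{i+j-1})_{i,j=0}^{p} = hankelM frak (p+1)`.
`ν_−(S_p^+) = ν_−(𝒮_{p+1}^-) − 1` is stated additively. -/
theorem index_identities_splus_of_toeplitz
    (L : ℕ) (hL : 2 ≤ L) (frak : ℕ → ℝ) (h0 : frak 0 ≠ 0)
    (l : ℝ) (hl : l = (frak 0)⁻¹)
    (s : ℕ → ℝ)
    (hTop : toeplitzU (fun i : Fin L => frak (i : ℕ)) *
      toeplitzU (fun i : Fin L => if (i : ℕ) = 0 then l else -s ((i : ℕ) - 1)) = 1) :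
    ∀ p : ℕ, 1 ≤ p → p ≤ (L - 2) / 2 →
      nuZero (hankelMp s p) = nuZero (hankelM frak (p + 1)) ∧
      (0 < frak 0 → nuNeg (hankelMp s p) = nuNeg (hankelM frak (p + 1))) ∧
      (frak 0 < 0 → nuNeg (hankelMp s p) + 1 = nuNeg (hankelM frak (p + 1))) :=
  index_identities_splus_of_toeplitz_general L frak l s hTop

end
end

section
/- Let m_1, …, m_N be real polynomials with nonzero leading coefficients d_1, …, d_N and let l_1, …, l_N be nonzero real numbers, and define b_0 = 1/d_1, a_0(z) = (z m_1(z) − 1/l_1)/d_1 and, for 1 ≤ j ≤ N−1, b_j = 1/(l_j² d_j d_{j+1}), a_j(z) = (z m_{j+1}(z) − (1/l_j + 1/l_{j+1}))/d_{j+1}. Then for every j = 1, …, N, the 2j-th convergent u_{2j}/v_{2j} of the generalized Stieltjes fraction with parameters (m_i, l_i) equals (as a rational function in z) the j-th convergent −Q_{n_j}(z)/P_{n_j}(z) of the P-fraction with parameters (a_i, b_i). -/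
/-!
Eliminating the even-indexed convergents from the Stieltjes recurrences leaves a three-term
recurrence for the odd-indexed ones, `w_k = u_{2k}` or `v_{2k}`.  Rescaled by
`c_k = ∏_{i ≤ k} (-l_i d_i)`, the polynomials `-Q_{n_k}` and `P_{n_k}` satisfy the same
recurrence with the same first two values; hence `u_{2k} = -c_k Q_{n_k}` and `v_{2k} = c_k P_{n_k}`,
and the common factor `c_k ≠ 0` cancels in the quotient.
-/

open Polynomial Finset

theorem eq_of_threeTerm_recurrence {R : Type*} [Ring R] [NoZeroDivisors R] {n : ℕ}
    {e f g x y : ℕ → R} (he : ∀ k, k + 2 ≤ n → e k ≠ 0)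
    (hx : ∀ k, k + 2 ≤ n → e k * x (k + 2) = f k * x (k + 1) - g k * x k)
    (hy : ∀ k, k + 2 ≤ n → e k * y (k + 2) = f k * y (k + 1) - g k * y k)
    (h0 : x 0 = y 0) (h1 : x 1 = y 1) : ∀ k ≤ n, x k = y k := by
  intro k
  induction k using Nat.strong_induction_on with
  | _ k ih =>
    match k with
    | 0 => exact fun _ => h0
    | 1 => exact fun _ => h1
    | k + 2 =>
      intro hk
      refine mul_left_cancel₀ (he k hk) ?_
      rw [hx k hk, hy k hk, ih k (by omega) (by omega), ih (k + 1) (by omega) (by omega)]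

/-- The recurrence satisfied by the odd-indexed terms `x k = W (2 * k + 1)` of a solution `W` of
the Stieltjes recurrences. -/
def IsOddContraction (N : ℕ) (m : ℕ → ℝ[X]) (l : ℕ → ℝ) (x : ℕ → ℝ[X]) : Prop :=
  ∀ k, k + 2 ≤ N → C (l (k + 1)) * x (k + 2) =
    (C (l (k + 1) + l (k + 2)) - C (l (k + 1) * l (k + 2)) * X * m (k + 2)) * x (k + 1) -
      C (l (k + 2)) * x k

def stieltjesScale (l d : ℕ → ℝ) (k : ℕ) : ℝ :=
  ∏ i ∈ range k, -(l (i + 1) * d (i + 1))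

section

variable {N : ℕ} {m : ℕ → ℝ[X]} {l d : ℕ → ℝ}

theorem IsOddContraction.eq {x y : ℕ → ℝ[X]} (hl : ∀ j, 1 ≤ j → j ≤ N → l j ≠ 0)
    (hx : IsOddContraction N m l x) (hy : IsOddContraction N m l y)
    (h0 : x 0 = y 0) (h1 : x 1 = y 1) : ∀ k ≤ N, x k = y k :=
  eq_of_threeTerm_recurrence (fun k hk => C_ne_zero.mpr (hl (k + 1) (by omega) (by omega)))
    hx hy h0 h1

theorem isOddContraction_of_stieltjes {W : ℕ → ℝ[X]}
    (hW1 : ∀ j, 1 ≤ j → j ≤ N → W (2 * j + 1) = W (2 * j - 1) + C (l j) * W (2 * j))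
    (hW2 : ∀ j, j + 1 ≤ N → W (2 * j + 2) = W (2 * j) - X * m (j + 1) * W (2 * j + 1)) :
    IsOddContraction N m l (fun k => W (2 * k + 1)) := by
  intro k hk
  have h3 : W (2 * k + 3) = W (2 * k + 1) + C (l (k + 1)) * W (2 * k + 2) :=
    hW1 (k + 1) (by omega) (by omega)
  have h4 : W (2 * k + 4) = W (2 * k + 2) - X * m (k + 2) * W (2 * k + 3) := hW2 (k + 1) hk
  have h5 : W (2 * k + 5) = W (2 * k + 3) + C (l (k + 2)) * W (2 * k + 4) :=
    hW1 (k + 2) (by omega) hk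
  simp only [C_add, C_mul]
  linear_combination C (l (k + 1)) * h5 + C (l (k + 1)) * C (l (k + 2)) * h4 - C (l (k + 2)) * h3

theorem stieltjesScale_succ (k : ℕ) :
    stieltjesScale l d (k + 1) = -(l (k + 1) * d (k + 1)) * stieltjesScale l d k := by
  rw [stieltjesScale, prod_range_succ, mul_comm]
  rfl

theorem stieltjesScale_ne_zero (hl : ∀ j, 1 ≤ j → j ≤ N → l j ≠ 0)
    (hd : ∀ j, 1 ≤ j → j ≤ N → d j ≠ 0) {k : ℕ} (hk : k ≤ N) : stieltjesScale l d k ≠ 0 :=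
  prod_ne_zero_iff.mpr fun i hi => by
    have hi : i < k := mem_range.mp hi
    exact neg_ne_zero.mpr (mul_ne_zero (hl _ (by omega) (by omega)) (hd _ (by omega) (by omega)))

theorem C_mul_C_inv {K : Type*} [DivisionRing K] {r : K} (hr : r ≠ 0) :
    (C r * C r⁻¹ : K[X]) = 1 := by
  rw [← C_mul, mul_inv_cancel₀ hr, C_1]

theorem isOddContraction_scale_mul {a : ℕ → ℝ[X]} {b : ℕ → ℝ} {R : ℕ → ℝ[X]}
    (hl : ∀ j, 1 ≤ j → j ≤ N → l j ≠ 0) (hd : ∀ j, 1 ≤ j → j ≤ N → d j ≠ 0)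
    (hb : ∀ j, 1 ≤ j → j ≤ N - 1 → b j = ((l j) ^ 2 * d j * d (j + 1))⁻¹)
    (ha : ∀ j, 1 ≤ j → j ≤ N - 1 → a j =
      C (d (j + 1))⁻¹ * (X * m (j + 1) - C ((l j)⁻¹ + (l (j + 1))⁻¹)))
    (hR : ∀ j, j ≤ N - 1 → R (j + 2) = a j * R (j + 1) - C (b j) * R j) :
    IsOddContraction N m l (fun k => C (stieltjesScale l d k) * R (k + 1)) := by
  intro k hk
  have hl₁ := hl (k + 1) (by omega) (by omega)
  have hl₂ := hl (k + 2) (by omega) hk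
  have hd₁ := hd (k + 1) (by omega) (by omega)
  have hd₂ := hd (k + 2) (by omega) hk
  have hR₃ : R (k + 3) = a (k + 1) * R (k + 2) - C (b (k + 1)) * R (k + 1) := hR (k + 1) (by omega)
  have ha₁ : C (l (k + 1) * l (k + 2) * d (k + 2)) * a (k + 1) =
      C (l (k + 1) * l (k + 2)) * X * m (k + 2) - C (l (k + 1) + l (k + 2)) := by
    rw [ha (k + 1) (by omega) (by omega), ← mul_assoc, ← C_mul, mul_sub, ← C_mul, ← mul_assoc]
    congr 3 <;> field_simp
    ring
  have hb₁ : C (l (k + 1) ^ 2 * d (k + 1) * d (k + 2)) * C (b (k + 1)) = 1 := by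
    rw [← C_mul, hb (k + 1) (by omega) (by omega), mul_inv_cancel₀ (by positivity), C_1]
  simp only [stieltjesScale_succ, hR₃, C_add, C_mul, C_neg, C_pow] at ha₁ hb₁ ⊢
  linear_combination C (stieltjesScale l d k) * C (l (k + 1)) * C (d (k + 1)) * R (k + 2) * ha₁ -
    C (stieltjesScale l d k) * C (l (k + 2)) * R (k + 1) * hb₁

theorem odd_stieltjes_eq_stieltjesScale_mul {a : ℕ → ℝ[X]} {b : ℕ → ℝ} {W R : ℕ → ℝ[X]}
    (hN : 1 ≤ N) (hl : ∀ j, 1 ≤ j → j ≤ N → l j ≠ 0) (hd : ∀ j, 1 ≤ j → j ≤ N → d j ≠ 0)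
    (hb₀ : b 0 = (d 1)⁻¹) (ha₀ : a 0 = C (d 1)⁻¹ * (X * m 1 - C (l 1)⁻¹))
    (hb : ∀ j, 1 ≤ j → j ≤ N - 1 → b j = ((l j) ^ 2 * d j * d (j + 1))⁻¹)
    (ha : ∀ j, 1 ≤ j → j ≤ N - 1 → a j =
      C (d (j + 1))⁻¹ * (X * m (j + 1) - C ((l j)⁻¹ + (l (j + 1))⁻¹)))
    (hW1 : ∀ j, 1 ≤ j → j ≤ N → W (2 * j + 1) = W (2 * j - 1) + C (l j) * W (2 * j))
    (hW2 : ∀ j, j + 1 ≤ N → W (2 * j + 2) = W (2 * j) - X * m (j + 1) * W (2 * j + 1))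
    (hR : ∀ j, j ≤ N - 1 → R (j + 2) = a j * R (j + 1) - C (b j) * R j)
    (h₀ : W 0 = R 0) (h₁ : W 1 = R 1) :
    ∀ k ≤ N, W (2 * k + 1) = C (stieltjesScale l d k) * R (k + 1) := by
  refine IsOddContraction.eq hl (isOddContraction_of_stieltjes hW1 hW2)
    (isOddContraction_scale_mul hl hd hb ha hR) (by simp [stieltjesScale, h₁]) ?_
  have hW₂ : W 2 = W 0 - X * m 1 * W 1 := hW2 0 hN
  have hW₃ : W 3 = W 1 + C (l 1) * W 2 := hW1 1 le_rfl hN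
  have hR₂ : R 2 = a 0 * R 1 - C (b 0) * R 0 := hR 0 (Nat.zero_le _)
  show W 3 = C (stieltjesScale l d 1) * R 2
  rw [show stieltjesScale l d 1 = -(l 1 * d 1) by simp [stieltjesScale],
    hW₃, hW₂, hR₂, ha₀, hb₀, h₀, h₁]
  simp only [C_mul, C_neg]
  linear_combination (C (l 1) * X * m 1 * R 1 - C (l 1) * R 0 - C (l 1) * C (l 1)⁻¹ * R 1) *
      C_mul_C_inv (hd 1 le_rfl hN) - R 1 * C_mul_C_inv (hl 1 le_rfl hN)

end

theorem stieltjes_fraction_convergents_eq_Pfraction_convergents_general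
    (N : ℕ) (m : ℕ → Polynomial ℝ) (l : ℕ → ℝ) (d : ℕ → ℝ)
    (hd0 : ∀ j, 1 ≤ j → j ≤ N → d j ≠ 0)
    (hl0 : ∀ j, 1 ≤ j → j ≤ N → l j ≠ 0)
    (b : ℕ → ℝ) (a : ℕ → Polynomial ℝ)
    (hb0 : b 0 = (d 1)⁻¹)
    (ha0 : a 0 = Polynomial.C (d 1)⁻¹ * (Polynomial.X * m 1 - Polynomial.C (l 1)⁻¹))
    (hb : ∀ j, 1 ≤ j → j ≤ N - 1 → b j = ((l j) ^ 2 * d j * d (j + 1))⁻¹)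
    (ha : ∀ j, 1 ≤ j → j ≤ N - 1 → a j =
      Polynomial.C (d (j + 1))⁻¹ *
        (Polynomial.X * m (j + 1) - Polynomial.C ((l j)⁻¹ + (l (j + 1))⁻¹)))
    (U V : ℕ → Polynomial ℝ)
    (hU0 : U 0 = 1) (hU1 : U 1 = 0) (hV0 : V 0 = 0) (hV1 : V 1 = 1)
    (hUrec2 : ∀ j, j + 1 ≤ N → U (2 * j + 2) = U (2 * j) - Polynomial.X * m (j + 1) * U (2 * j + 1))
    (hUrec1 : ∀ j, 1 ≤ j → j ≤ N → U (2 * j + 1) = U (2 * j - 1) + Polynomial.C (l j) * U (2 * j))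
    (hVrec2 : ∀ j, j + 1 ≤ N → V (2 * j + 2) = V (2 * j) - Polynomial.X * m (j + 1) * V (2 * j + 1))
    (hVrec1 : ∀ j, 1 ≤ j → j ≤ N → V (2 * j + 1) = V (2 * j - 1) + Polynomial.C (l j) * V (2 * j))
    (P Q : ℕ → Polynomial ℝ)
    (hP0 : P 0 = 0) (hP1 : P 1 = 1) (hQ0 : Q 0 = -1) (hQ1 : Q 1 = 0)
    (hPrec : ∀ j, j ≤ N - 1 → P (j + 2) = a j * P (j + 1) - Polynomial.C (b j) * P j)
    (hQrec : ∀ j, j ≤ N - 1 → Q (j + 2) = a j * Q (j + 1) - Polynomial.C (b j) * Q j) :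
    ∀ j, 1 ≤ j → j ≤ N →
      (algebraMap (Polynomial ℝ) (RatFunc ℝ)) (U (2 * j + 1)) /
          (algebraMap (Polynomial ℝ) (RatFunc ℝ)) (V (2 * j + 1)) =
        -((algebraMap (Polynomial ℝ) (RatFunc ℝ)) (Q (j + 1)) /
          (algebraMap (Polynomial ℝ) (RatFunc ℝ)) (P (j + 1))) := by
  intro j hj₁ hjN
  have hN : 1 ≤ N := hj₁.trans hjN
  have hU : U (2 * j + 1) = C (stieltjesScale l d j) * -Q (j + 1) :=
    odd_stieltjes_eq_stieltjesScale_mul (R := fun k => -Q k) hN hl0 hd0 hb0 ha0 hb ha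
      hUrec1 hUrec2 (fun k hk => by rw [hQrec k hk]; ring) (by rw [hU0, hQ0, neg_neg])
      (by rw [hU1, hQ1, neg_zero]) j hjN
  have hV : V (2 * j + 1) = C (stieltjesScale l d j) * P (j + 1) :=
    odd_stieltjes_eq_stieltjesScale_mul hN hl0 hd0 hb0 ha0 hb ha hVrec1 hVrec2 hPrec
      (hV0.trans hP0.symm) (hV1.trans hP1.symm) j hjN
  have hc : algebraMap ℝ[X] (RatFunc ℝ) (C (stieltjesScale l d j)) ≠ 0 :=
    RatFunc.algebraMap_ne_zero (C_ne_zero.mpr (stieltjesScale_ne_zero hl0 hd0 hjN))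
  rw [hU, hV, map_mul, map_mul, mul_div_mul_left _ _ hc, map_neg, neg_div]

/-- Theorem 5.1: the `2j`-th convergent `u_{2j}/v_{2j}` of the generalized Stieltjes fraction
with parameters `(m_i, l_i)` equals the `j`-th convergent `-Q_{n_j}/P_{n_j}` of the
`P`-fraction with parameters `(a_i, b_i)`.  Indices are shifted by one:
`U (k+1) = u_k`, `V (k+1) = v_k`, `P (j+1) = P_{n_j}`, `Q (j+1) = Q_{n_j}`. -/
theorem stieltjes_fraction_convergents_eq_Pfraction_convergents
    (N : ℕ) (hN : 1 ≤ N) (m : ℕ → Polynomial ℝ) (l : ℕ → ℝ) (d : ℕ → ℝ)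
    (hd : ∀ j, 1 ≤ j → j ≤ N → d j = (m j).leadingCoeff)
    (hd0 : ∀ j, 1 ≤ j → j ≤ N → d j ≠ 0)
    (hl0 : ∀ j, 1 ≤ j → j ≤ N → l j ≠ 0)
    (b : ℕ → ℝ) (a : ℕ → Polynomial ℝ)
    (hb0 : b 0 = (d 1)⁻¹)
    (ha0 : a 0 = Polynomial.C (d 1)⁻¹ * (Polynomial.X * m 1 - Polynomial.C (l 1)⁻¹))
    (hb : ∀ j, 1 ≤ j → j ≤ N - 1 → b j = ((l j) ^ 2 * d j * d (j + 1))⁻¹)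
    (ha : ∀ j, 1 ≤ j → j ≤ N - 1 → a j =
      Polynomial.C (d (j + 1))⁻¹ *
        (Polynomial.X * m (j + 1) - Polynomial.C ((l j)⁻¹ + (l (j + 1))⁻¹)))
    (U V : ℕ → Polynomial ℝ)
    (hU0 : U 0 = 1) (hU1 : U 1 = 0) (hV0 : V 0 = 0) (hV1 : V 1 = 1)
    (hUrec2 : ∀ j, j + 1 ≤ N → U (2 * j + 2) = U (2 * j) - Polynomial.X * m (j + 1) * U (2 * j + 1))
    (hUrec1 : ∀ j, 1 ≤ j → j ≤ N → U (2 * j + 1) = U (2 * j - 1) + Polynomial.C (l j) * U (2 * j))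
    (hVrec2 : ∀ j, j + 1 ≤ N → V (2 * j + 2) = V (2 * j) - Polynomial.X * m (j + 1) * V (2 * j + 1))
    (hVrec1 : ∀ j, 1 ≤ j → j ≤ N → V (2 * j + 1) = V (2 * j - 1) + Polynomial.C (l j) * V (2 * j))
    (P Q : ℕ → Polynomial ℝ)
    (hP0 : P 0 = 0) (hP1 : P 1 = 1) (hQ0 : Q 0 = -1) (hQ1 : Q 1 = 0)
    (hPrec : ∀ j, j ≤ N - 1 → P (j + 2) = a j * P (j + 1) - Polynomial.C (b j) * P j)
    (hQrec : ∀ j, j ≤ N - 1 → Q (j + 2) = a j * Q (j + 1) - Polynomial.C (b j) * Q j) :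
    ∀ j, 1 ≤ j → j ≤ N →
      (algebraMap (Polynomial ℝ) (RatFunc ℝ)) (U (2 * j + 1)) /
          (algebraMap (Polynomial ℝ) (RatFunc ℝ)) (V (2 * j + 1)) =
        -((algebraMap (Polynomial ℝ) (RatFunc ℝ)) (Q (j + 1)) /
          (algebraMap (Polynomial ℝ) (RatFunc ℝ)) (P (j + 1))) :=
  stieltjes_fraction_convergents_eq_Pfraction_convergents_general N m l d hd0 hl0 b a hb0 ha0 hb ha
    U V hU0 hU1 hV0 hV1 hUrec2 hUrec1 hVrec2 hVrec1 P Q hP0 hP1 hQ0 hQ1 hPrec hQrec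
end

section
/- Let m_1, …, m_N be real polynomials with nonzero leading coefficients d_1, …, d_N, let l_1, …, l_N be nonzero real numbers, define b_0 = 1/d_1, a_0(z) = (z m_1(z) − 1/l_1)/d_1 and, for 1 ≤ j ≤ N−1, b_j = 1/(l_j² d_j d_{j+1}), a_j(z) = (z m_{j+1}(z) − (1/l_j + 1/l_{j+1}))/d_{j+1}, and let P_{n_j} be the polynomials of the first kind for these parameters. Then for j = 1, …, N−1: (1) P_{n_j}(0) = (−1)^j ∏_{i=1}^j 1/(d_i l_i); (2) P_{n_j}(0)² = d_{j+1} ∏_{i=0}^j b_i; (3) P_{n_{j−1}}(0)·P_{n_j}(0) = −(1/l_j) ∏_{i=0}^{j−1} b_i. -/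
/-!
At `z = 0` the recurrence becomes a real three-term recurrence whose coefficients telescope:
with `c i = (d i * l i)⁻¹` one has `c j * (l j * d (j + 1))⁻¹ = b j`, so in
`P_{n_{j+1}}(0) = a_j(0) P_{n_j}(0) - b_j P_{n_{j-1}}(0)` the `1 / l_j` part of `a_j(0)` cancels the
`b_j` term and only the factor `-c (j + 1)` survives. Hence `P_{n_j}(0) = (-1)^j ∏_{i ≤ j} c i`,
and (2), (3) follow by comparing with `∏ b i = d (j + 1)⁻¹ ∏_{i ≤ j} (c i)²`.
-/

open Polynomial Finset

section ThreeTerm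

variable {n : ℕ} {l d b : ℕ → ℝ}

theorem prod_range_succ_eq_inv_mul_prod_sq
    (hb0 : b 0 = (d 1)⁻¹) (hb : ∀ j, 1 ≤ j → j ≤ n → b j = ((l j) ^ 2 * d j * d (j + 1))⁻¹) :
    ∀ j ≤ n, ∏ i ∈ range (j + 1), b i = (d (j + 1))⁻¹ * ∏ i ∈ Icc 1 j, ((d i * l i)⁻¹) ^ 2 := by
  intro j hj
  induction j with
  | zero => simp [hb0]
  | succ k ih =>
    rw [prod_range_succ, ih (by omega), hb (k + 1) (by omega) hj,
      prod_Icc_succ_top (by omega : 1 ≤ k + 1)]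
    simp only [mul_inv]
    ring

theorem eq_neg_one_pow_mul_prod_of_three_term {u α : ℕ → ℝ} (hu0 : u 0 = 0) (hu1 : u 1 = 1)
    (hα0 : α 0 = -(d 1 * l 1)⁻¹)
    (hα : ∀ j, 1 ≤ j → j < n → α j = -((d (j + 1))⁻¹ * ((l j)⁻¹ + (l (j + 1))⁻¹)))
    (hb : ∀ j, 1 ≤ j → j < n → b j = ((l j) ^ 2 * d j * d (j + 1))⁻¹)
    (hrec : ∀ j < n, u (j + 2) = α j * u (j + 1) - b j * u j) :
    ∀ j ≤ n, u (j + 1) = (-1) ^ j * ∏ i ∈ Icc 1 j, (d i * l i)⁻¹ := by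
  intro j
  induction j using Nat.twoStepInduction with
  | zero => simp [hu1]
  | one => intro hn; simp [hrec 0 hn, hα0, hu0, hu1]
  | more k ih₀ ih₁ =>
    intro hk
    rw [hrec (k + 1) (by omega), hα (k + 1) (by omega) (by omega), hb (k + 1) (by omega) (by omega),
      ih₁ (by omega), ih₀ (by omega), prod_Icc_succ_top (by omega : 1 ≤ k + 1 + 1),
      prod_Icc_succ_top (by omega : 1 ≤ k + 1)]
    simp only [mul_inv]
    ring

end ThreeTerm

/- Indices are shifted by one: `P (j + 1) = P_{n_j}`. -/
theorem first_kind_polynomials_at_zero_general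
    (N : ℕ) (m : ℕ → Polynomial ℝ) (l : ℕ → ℝ) (d : ℕ → ℝ)
    (hd0 : ∀ j, 1 ≤ j → j ≤ N → d j ≠ 0)
    (b : ℕ → ℝ) (a : ℕ → Polynomial ℝ)
    (hb0 : b 0 = (d 1)⁻¹)
    (ha0 : a 0 = Polynomial.C (d 1)⁻¹ * (Polynomial.X * m 1 - Polynomial.C (l 1)⁻¹))
    (hb : ∀ j, 1 ≤ j → j ≤ N - 1 → b j = ((l j) ^ 2 * d j * d (j + 1))⁻¹)
    (ha : ∀ j, 1 ≤ j → j ≤ N - 1 → a j =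
      Polynomial.C (d (j + 1))⁻¹ *
        (Polynomial.X * m (j + 1) - Polynomial.C ((l j)⁻¹ + (l (j + 1))⁻¹)))
    (P : ℕ → Polynomial ℝ)
    (hP0 : P 0 = 0) (hP1 : P 1 = 1)
    (hPrec : ∀ j, j ≤ N - 1 → P (j + 2) = a j * P (j + 1) - Polynomial.C (b j) * P j) :
    ∀ j, 1 ≤ j → j ≤ N - 1 →
      (P (j + 1)).eval 0 = (-1 : ℝ) ^ j * ∏ i ∈ Finset.Icc 1 j, (d i * l i)⁻¹ ∧
      ((P (j + 1)).eval 0) ^ 2 = d (j + 1) * ∏ i ∈ Finset.range (j + 1), b i ∧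
      (P j).eval 0 * (P (j + 1)).eval 0 = -(l j)⁻¹ * ∏ i ∈ Finset.range j, b i := by
  have hval := eq_neg_one_pow_mul_prod_of_three_term (n := N - 1) (u := fun k ↦ (P k).eval 0)
    (α := fun k ↦ (a k).eval 0) (by simp [hP0]) (by simp [hP1]) (by simp [ha0]; ring)
    (fun j h1 hj ↦ by simp [ha j h1 hj.le]; ring) (fun j h1 hj ↦ hb j h1 hj.le)
    (fun j hj ↦ by simp [hPrec j hj.le])
  have hprod := prod_range_succ_eq_inv_mul_prod_sq hb0 hb
  intro j hj1 hj
  obtain ⟨k, rfl⟩ : ∃ k, j = k + 1 := ⟨j - 1, by omega⟩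
  have hsq : ∀ i : ℕ, ((-1 : ℝ) ^ i) ^ 2 = 1 := fun i ↦ by
    rw [pow_right_comm, neg_one_sq, one_pow]
  refine ⟨hval (k + 1) hj, ?_, ?_⟩
  · rw [hval (k + 1) hj, hprod (k + 1) hj, mul_pow, hsq, one_mul, prod_pow,
      mul_inv_cancel_left₀ (hd0 (k + 2) (by omega) (by omega))]
  · rw [hval (k + 1) hj, hval k (by omega), hprod k (by omega),
      prod_Icc_succ_top (by omega : 1 ≤ k + 1), prod_pow, mul_inv]
    linear_combination (-((d (k + 1))⁻¹ * (l (k + 1))⁻¹ *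
      (∏ i ∈ Icc 1 k, (d i * l i)⁻¹) ^ 2)) * hsq k

/-- Lemma 5.3 (values of the polynomials of the first kind at 0).
Indices are shifted by one: `P (j+1) = P_{n_j}`. -/
theorem first_kind_polynomials_at_zero
    (N : ℕ) (hN : 1 ≤ N) (m : ℕ → Polynomial ℝ) (l : ℕ → ℝ) (d : ℕ → ℝ)
    (hd : ∀ j, 1 ≤ j → j ≤ N → d j = (m j).leadingCoeff)
    (hd0 : ∀ j, 1 ≤ j → j ≤ N → d j ≠ 0)
    (hl0 : ∀ j, 1 ≤ j → j ≤ N → l j ≠ 0)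
    (b : ℕ → ℝ) (a : ℕ → Polynomial ℝ)
    (hb0 : b 0 = (d 1)⁻¹)
    (ha0 : a 0 = Polynomial.C (d 1)⁻¹ * (Polynomial.X * m 1 - Polynomial.C (l 1)⁻¹))
    (hb : ∀ j, 1 ≤ j → j ≤ N - 1 → b j = ((l j) ^ 2 * d j * d (j + 1))⁻¹)
    (ha : ∀ j, 1 ≤ j → j ≤ N - 1 → a j =
      Polynomial.C (d (j + 1))⁻¹ *
        (Polynomial.X * m (j + 1) - Polynomial.C ((l j)⁻¹ + (l (j + 1))⁻¹)))
    (P : ℕ → Polynomial ℝ)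
    (hP0 : P 0 = 0) (hP1 : P 1 = 1)
    (hPrec : ∀ j, j ≤ N - 1 → P (j + 2) = a j * P (j + 1) - Polynomial.C (b j) * P j) :
    ∀ j, 1 ≤ j → j ≤ N - 1 →
      (P (j + 1)).eval 0 = (-1 : ℝ) ^ j * ∏ i ∈ Finset.Icc 1 j, (d i * l i)⁻¹ ∧
      ((P (j + 1)).eval 0) ^ 2 = d (j + 1) * ∏ i ∈ Finset.range (j + 1), b i ∧
      (P j).eval 0 * (P (j + 1)).eval 0 = -(l j)⁻¹ * ∏ i ∈ Finset.range j, b i :=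
  first_kind_polynomials_at_zero_general N m l d hd0 b a hb0 ha0 hb ha P hP0 hP1 hPrec
end

section
/- Let m_1, …, m_N be real polynomials with nonzero leading coefficients d_1, …, d_N, let l_1, …, l_N be nonzero real numbers, define b_0 = 1/d_1, a_0(z) = (z m_1(z) − 1/l_1)/d_1 and, for 1 ≤ j ≤ N−1, b_j = 1/(l_j² d_j d_{j+1}), a_j(z) = (z m_{j+1}(z) − (1/l_j + 1/l_{j+1}))/d_{j+1}; let P_{n_j}, Q_{n_j} be the polynomials of the first and second kind for these parameters, assume P_{n_j}(0) ≠ 0 for all j, and let P^+_j, Q^+_j be the corresponding Stieltjes polynomials. Then the functions u_j = Q^+_j and v_j = P^+_j solve the difference system y_{2i} − y_{2i−2} = l_i y_{2i−1}, y_{2i+1} − y_{2i−1} = −z m_{i+1}(z) y_{2i} with initial conditions u_{−1} ≡ 1, u_0 ≡ 0, v_{−1} ≡ 0, v_0 ≡ 1; equivalently, for i = 1, …, N: P^+_{2i−1}(z) = −z m_i(z) P^+_{2i−2}(z) + P^+_{2i−3}(z), P^+_{2i}(z) = l_i P^+_{2i−1}(z) + P^+_{2i−2}(z), Q^+_{2i−1}(z)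 = −z m_i(z) Q^+_{2i−2}(z) + Q^+_{2i−3}(z), and Q^+_{2i}(z) = l_i Q^+_{2i−1}(z) + Q^+_{2i−2}(z). -/
/-!
Write `p_j = P_{n_j}(0)` and, for `y = P` or `Q`, `W_i(y) = y_{n_i} p_{i-1} - y_{n_{i-1}} p_i`, so
that `P^+_{2i-1}` and `Q^+_{2i-1}` are `∓W_i / (b_0 ⋯ b_{i-1})`. Since `p` solves the recurrence
evaluated at `z = 0`, `W_{i+1} = b_i W_i + (a_i(z) - a_i(0)) p_i y_{n_i}`, and for these parameters
`a_i(z) - a_i(0) = z m_{i+1}(z) / d_{i+1}`. The parameters also force `p_i = -p_{i-1} / (d_i l_i)`,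
hence `p_{i-1}² = b_0 ⋯ b_{i-1} d_i`; with these two identities both halves of the difference
system become polynomial identities.
-/

open Polynomial Finset

noncomputable section

section Casoratian

variable {R : Type*} [CommRing R]

def casoratianAtZero (p y : ℕ → R[X]) (k : ℕ) : R[X] :=
  y (k + 1) * C ((p k).eval 0) - y k * C ((p (k + 1)).eval 0)

theorem casoratianAtZero_succ {a : R[X]} {β : R} {p y : ℕ → R[X]} {k : ℕ}
    (hp : p (k + 2) = a * p (k + 1) - C β * p k)
    (hy : y (k + 2) = a * y (k + 1) - C β * y k) :
    casoratianAtZero p y (k + 1) =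
      (a - C (a.eval 0)) * C ((p (k + 1)).eval 0) * y (k + 1) + C β * casoratianAtZero p y k := by
  simp only [casoratianAtZero, hy, hp, eval_sub, eval_mul, eval_C, map_sub, map_mul]
  ring

end Casoratian

section StieltjesPolynomials

variable {K : Type*} [Field K] (b : ℕ → K) (p y : ℕ → K[X])

/-- `stieltjesOdd b P P i = -P^+_{2i-1}`, `stieltjesEven P P i = P^+_{2i}`,
`stieltjesOdd b P Q i = Q^+_{2i-1}` and `stieltjesEven P Q i = -Q^+_{2i}`. -/
def stieltjesOdd (i : ℕ) : K[X] :=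
  C (∏ t ∈ range i, b t)⁻¹ * casoratianAtZero p y i

def stieltjesEven (i : ℕ) : K[X] :=
  C ((p (i + 1)).eval 0)⁻¹ * y (i + 1)

variable {b p y} {k : ℕ}

theorem stieltjesOdd_succ {a M : K[X]} {D c : K} (ha : a = C D⁻¹ * (X * M - C c))
    (hp : p (k + 2) = a * p (k + 1) - C (b k) * p k)
    (hy : y (k + 2) = a * y (k + 1) - C (b k) * y k) (hb : b k ≠ 0)
    (hsq : (p (k + 1)).eval 0 ^ 2 = (∏ t ∈ range (k + 1), b t) * D) :
    stieltjesOdd b p y (k + 1) = X * M * stieltjesEven p y k + stieltjesOdd b p y k := by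
  set e := (p (k + 1)).eval 0
  have hlin : a - C (a.eval 0) = C D⁻¹ * (X * M) := by
    rw [ha]; simp only [eval_mul, eval_sub, eval_C, eval_X, zero_mul, zero_sub, mul_neg,
      map_neg, map_mul]; ring
  have hcoef : (∏ t ∈ range (k + 1), b t)⁻¹ * (D⁻¹ * e) = e⁻¹ := by
    rw [← mul_assoc, ← mul_inv, ← hsq]
    by_cases he : e = 0
    · simp [he]
    · field_simp
  have hprod : (∏ t ∈ range (k + 1), b t)⁻¹ * b k = (∏ t ∈ range k, b t)⁻¹ := by
    rw [prod_range_succ, mul_inv, mul_assoc, inv_mul_cancel₀ hb, mul_one]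
  rw [stieltjesOdd, stieltjesOdd, stieltjesEven, casoratianAtZero_succ hp hy, hlin, ← hcoef,
    ← hprod]
  simp only [map_mul]
  ring

theorem stieltjesEven_succ {D L : K}
    (he : (p (k + 2)).eval 0 = -(D * L)⁻¹ * (p (k + 1)).eval 0)
    (hsq : (p (k + 1)).eval 0 ^ 2 = (∏ t ∈ range (k + 1), b t) * D)
    (hD : D ≠ 0) (hL : L ≠ 0) (hπ : ∏ t ∈ range (k + 1), b t ≠ 0) :
    stieltjesEven p y (k + 1) = stieltjesEven p y k - C L * stieltjesOdd b p y (k + 1) := by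
  set π := ∏ t ∈ range (k + 1), b t
  set e := (p (k + 1)).eval 0
  have he0 : e ≠ 0 := fun h ↦ hπ (by simpa [h, hD] using hsq)
  have h₂ : ((p (k + 2)).eval 0)⁻¹ = -(L * π⁻¹ * e) := by
    rw [he]; field_simp; linear_combination hsq
  have h₁ : e⁻¹ = -(L * π⁻¹ * (p (k + 2)).eval 0) := by
    rw [he]; field_simp; linear_combination -hsq
  rw [stieltjesEven, stieltjesEven, stieltjesOdd, casoratianAtZero, h₂, h₁]
  simp only [map_mul, map_neg]
  ring

end StieltjesPolynomials

namespace StieltjesParameters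

variable {K : Type*} [Field K] {N : ℕ} {m a P : ℕ → K[X]} {l d b : ℕ → K}

theorem b_ne_zero (hd0 : ∀ j, 1 ≤ j → j ≤ N → d j ≠ 0) (hl0 : ∀ j, 1 ≤ j → j ≤ N → l j ≠ 0)
    (hb0 : b 0 = (d 1)⁻¹) (hb : ∀ j, 1 ≤ j → j ≤ N - 1 → b j = ((l j) ^ 2 * d j * d (j + 1))⁻¹) :
    ∀ j, j < N → b j ≠ 0
  | 0, hN => by simpa [hb0] using hd0 1 le_rfl hN
  | j + 1, hj => by
    rw [hb _ le_add_self (by omega)]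
    simp [hl0 (j + 1) le_add_self hj.le, hd0 (j + 1) le_add_self hj.le, hd0 (j + 2) (by omega) hj]

theorem eval_zero_succ (hd0 : ∀ j, 1 ≤ j → j ≤ N → d j ≠ 0)
    (hl0 : ∀ j, 1 ≤ j → j ≤ N → l j ≠ 0) (ha0 : a 0 = C (d 1)⁻¹ * (X * m 1 - C (l 1)⁻¹))
    (hb : ∀ j, 1 ≤ j → j ≤ N - 1 → b j = ((l j) ^ 2 * d j * d (j + 1))⁻¹)
    (ha : ∀ j, 1 ≤ j → j ≤ N - 1 →
      a j = C (d (j + 1))⁻¹ * (X * m (j + 1) - C ((l j)⁻¹ + (l (j + 1))⁻¹)))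
    (hP0 : P 0 = 0) (hP1 : P 1 = 1)
    (hPrec : ∀ j, j ≤ N - 1 → P (j + 2) = a j * P (j + 1) - C (b j) * P j) :
    ∀ i, 1 ≤ i → i ≤ N → (P (i + 1)).eval 0 = -(d i * l i)⁻¹ * (P i).eval 0 := by
  intro i hi
  induction i, hi using Nat.le_induction with
  | base =>
    intro _
    rw [hPrec 0 (by omega), ha0, hP1, hP0]
    simp only [eval_sub, eval_mul, eval_C, eval_X, eval_one, eval_zero, mul_inv]
    ring
  | succ i hi ih =>
    intro hiN
    have hprev : (P i).eval 0 = -(d i * l i) * (P (i + 1)).eval 0 := by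
      rw [ih (by omega)]
      field_simp [hd0 i hi (by omega), hl0 i hi (by omega)]
    rw [hPrec i (by omega), ha i hi (by omega), hb i hi (by omega)]
    simp only [eval_sub, eval_mul, eval_C, eval_X, zero_mul, zero_sub]
    rw [hprev]
    field_simp [hd0 i hi (by omega), hl0 i hi (by omega)]
    ring

theorem eval_zero_sq (hd0 : ∀ j, 1 ≤ j → j ≤ N → d j ≠ 0) (hb0 : b 0 = (d 1)⁻¹)
    (hb : ∀ j, 1 ≤ j → j ≤ N - 1 → b j = ((l j) ^ 2 * d j * d (j + 1))⁻¹) (hP1 : P 1 = 1)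
    (he : ∀ i, 1 ≤ i → i ≤ N → (P (i + 1)).eval 0 = -(d i * l i)⁻¹ * (P i).eval 0) :
    ∀ i, 1 ≤ i → i ≤ N → (P i).eval 0 ^ 2 = (∏ t ∈ range i, b t) * d i := by
  intro i hi
  induction i, hi using Nat.le_induction with
  | base =>
    intro hN
    simp [hP1, hb0, hd0 1 le_rfl hN]
  | succ i hi ih =>
    intro hiN
    rw [he i hi (by omega), prod_range_succ, hb i hi (by omega), mul_pow, ih (by omega)]
    field_simp [hd0 i hi (by omega), hd0 (i + 1) (by omega) hiN]

theorem stieltjes_difference_step (hd0 : ∀ j, 1 ≤ j → j ≤ N → d j ≠ 0)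
    (hl0 : ∀ j, 1 ≤ j → j ≤ N → l j ≠ 0) (hb0 : b 0 = (d 1)⁻¹)
    (ha0 : a 0 = C (d 1)⁻¹ * (X * m 1 - C (l 1)⁻¹))
    (hb : ∀ j, 1 ≤ j → j ≤ N - 1 → b j = ((l j) ^ 2 * d j * d (j + 1))⁻¹)
    (ha : ∀ j, 1 ≤ j → j ≤ N - 1 →
      a j = C (d (j + 1))⁻¹ * (X * m (j + 1) - C ((l j)⁻¹ + (l (j + 1))⁻¹)))
    (hP0 : P 0 = 0) (hP1 : P 1 = 1)
    (hPrec : ∀ j, j ≤ N - 1 → P (j + 2) = a j * P (j + 1) - C (b j) * P j)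
    {y : ℕ → K[X]} (hyrec : ∀ j, j ≤ N - 1 → y (j + 2) = a j * y (j + 1) - C (b j) * y j)
    {k : ℕ} (hk : k < N) :
    stieltjesOdd b P y (k + 1) = X * m (k + 1) * stieltjesEven P y k + stieltjesOdd b P y k ∧
      stieltjesEven P y (k + 1) =
        stieltjesEven P y k - C (l (k + 1)) * stieltjesOdd b P y (k + 1) := by
  have he := eval_zero_succ hd0 hl0 ha0 hb ha hP0 hP1 hPrec
  have hsq := eval_zero_sq hd0 hb0 hb hP1 he (k + 1) le_add_self hk
  have hb_ne := b_ne_zero hd0 hl0 hb0 hb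
  obtain ⟨c, hak⟩ : ∃ c, a k = C (d (k + 1))⁻¹ * (X * m (k + 1) - C c) := by
    rcases k with _ | k
    exacts [⟨_, ha0⟩, ⟨_, ha _ le_add_self (by omega)⟩]
  refine ⟨stieltjesOdd_succ hak (hPrec k (by omega)) (hyrec k (by omega)) (hb_ne k hk) hsq,
    stieltjesEven_succ (he _ le_add_self hk) hsq (hd0 _ le_add_self hk) (hl0 _ le_add_self hk) ?_⟩
  exact prod_ne_zero_iff.mpr fun t ht ↦ hb_ne t (by rw [mem_range] at ht; omega)

end StieltjesParameters

/-- Indices are shifted by one: `P (j+1) = P_{n_j}`, `Q (j+1) = Q_{n_j}`, `Pp (j+1) = P^+_j`,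
`Qp (j+1) = Q^+_j`. -/
theorem stieltjes_polynomials_solve_difference_system_general
    (N : ℕ) (m : ℕ → Polynomial ℝ) (l : ℕ → ℝ) (d : ℕ → ℝ)
    (hd0 : ∀ j, 1 ≤ j → j ≤ N → d j ≠ 0)
    (hl0 : ∀ j, 1 ≤ j → j ≤ N → l j ≠ 0)
    (b : ℕ → ℝ) (a : ℕ → Polynomial ℝ)
    (hb0 : b 0 = (d 1)⁻¹)
    (ha0 : a 0 = Polynomial.C (d 1)⁻¹ * (Polynomial.X * m 1 - Polynomial.C (l 1)⁻¹))
    (hb : ∀ j, 1 ≤ j → j ≤ N - 1 → b j = ((l j) ^ 2 * d j * d (j + 1))⁻¹)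
    (ha : ∀ j, 1 ≤ j → j ≤ N - 1 → a j =
      Polynomial.C (d (j + 1))⁻¹ *
        (Polynomial.X * m (j + 1) - Polynomial.C ((l j)⁻¹ + (l (j + 1))⁻¹)))
    (P Q : ℕ → Polynomial ℝ)
    (hP0 : P 0 = 0) (hP1 : P 1 = 1) (hQ0 : Q 0 = -1) (hQ1 : Q 1 = 0)
    (hPrec : ∀ j, j ≤ N - 1 → P (j + 2) = a j * P (j + 1) - Polynomial.C (b j) * P j)
    (hQrec : ∀ j, j ≤ N - 1 → Q (j + 2) = a j * Q (j + 1) - Polynomial.C (b j) * Q j)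
    (Pp Qp : ℕ → Polynomial ℝ)
    (hPp0 : Pp 0 = 0) (hPp1 : Pp 1 = 1) (hQp0 : Qp 0 = 1) (hQp1 : Qp 1 = 0)
    (hPpodd : ∀ i, 1 ≤ i → i ≤ N → Pp (2 * i) =
      Polynomial.C (-(∏ t ∈ Finset.range i, b t)⁻¹) *
        (P (i + 1) * Polynomial.C ((P i).eval 0) - P i * Polynomial.C ((P (i + 1)).eval 0)))
    (hPpeven : ∀ i, 1 ≤ i → i ≤ N → Pp (2 * i + 1) =
      Polynomial.C ((P (i + 1)).eval 0)⁻¹ * P (i + 1))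
    (hQpodd : ∀ i, 1 ≤ i → i ≤ N → Qp (2 * i) =
      Polynomial.C (∏ t ∈ Finset.range i, b t)⁻¹ *
        (Q (i + 1) * Polynomial.C ((P i).eval 0) - Q i * Polynomial.C ((P (i + 1)).eval 0)))
    (hQpeven : ∀ i, 1 ≤ i → i ≤ N → Qp (2 * i + 1) =
      -(Polynomial.C ((P (i + 1)).eval 0)⁻¹ * Q (i + 1))) :
    ∀ i, 1 ≤ i → i ≤ N →
      (Pp (2 * i) = -(Polynomial.X * m i) * Pp (2 * i - 1) + Pp (2 * i - 2) ∧
        Pp (2 * i + 1) = Polynomial.C (l i) * Pp (2 * i) + Pp (2 * i - 1)) ∧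
      (Qp (2 * i) = -(Polynomial.X * m i) * Qp (2 * i - 1) + Qp (2 * i - 2) ∧
        Qp (2 * i + 1) = Polynomial.C (l i) * Qp (2 * i) + Qp (2 * i - 1)) := by
  intro i hi hiN
  obtain ⟨k, rfl⟩ : ∃ k, i = k + 1 := ⟨i - 1, by omega⟩
  obtain ⟨hPodd, hPeven⟩ := StieltjesParameters.stieltjes_difference_step hd0 hl0 hb0 ha0 hb ha
    hP0 hP1 hPrec hPrec hiN
  obtain ⟨hQodd, hQeven⟩ := StieltjesParameters.stieltjes_difference_step hd0 hl0 hb0 ha0 hb ha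
    hP0 hP1 hPrec hQrec hiN
  have hforms : ∀ j ≤ N, Pp (2 * j) = -stieltjesOdd b P P j ∧
      Pp (2 * j + 1) = stieltjesEven P P j ∧ Qp (2 * j) = stieltjesOdd b P Q j ∧
      Qp (2 * j + 1) = -stieltjesEven P Q j := by
    rintro (_ | j) hj
    · simp [stieltjesOdd, stieltjesEven, casoratianAtZero, hP0, hP1, hQ0, hQ1, hPp0, hPp1, hQp0,
        hQp1]
    · rw [hPpodd _ le_add_self hj, hPpeven _ le_add_self hj, hQpodd _ le_add_self hj,
        hQpeven _ le_add_self hj]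
      simp only [stieltjesOdd, stieltjesEven, casoratianAtZero, map_neg, neg_mul, and_self]
  obtain ⟨hPk, hPk', hQk, hQk'⟩ := hforms k (by omega)
  obtain ⟨hPk₁, hPk₁', hQk₁, hQk₁'⟩ := hforms (k + 1) hiN
  rw [show 2 * (k + 1) - 1 = 2 * k + 1 by omega, show 2 * (k + 1) - 2 = 2 * k by omega,
    hPk, hPk', hQk, hQk', hPk₁, hPk₁', hQk₁, hQk₁']
  refine ⟨⟨?_, ?_⟩, ?_, ?_⟩
  · linear_combination -hPodd
  · linear_combination hPeven
  · linear_combination hQodd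
  · linear_combination -hQeven

/-- Proposition 5.4: the Stieltjes polynomials `Q^+_j`, `P^+_j` solve the difference system
`y_{2i} - y_{2i-2} = l_i y_{2i-1}`, `y_{2i+1} - y_{2i-1} = -z m_{i+1}(z) y_{2i}` with the
initial conditions `u_{-1} ≡ 1, u_0 ≡ 0, v_{-1} ≡ 0, v_0 ≡ 1`.  Indices are shifted by one:
`P (j+1) = P_{n_j}`, `Q (j+1) = Q_{n_j}`, `Pp (j+1) = P^+_j`, `Qp (j+1) = Q^+_j`. -/
theorem stieltjes_polynomials_solve_difference_system
    (N : ℕ) (hN : 1 ≤ N) (m : ℕ → Polynomial ℝ) (l : ℕ → ℝ) (d : ℕ → ℝ)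
    (hd : ∀ j, 1 ≤ j → j ≤ N → d j = (m j).leadingCoeff)
    (hd0 : ∀ j, 1 ≤ j → j ≤ N → d j ≠ 0)
    (hl0 : ∀ j, 1 ≤ j → j ≤ N → l j ≠ 0)
    (b : ℕ → ℝ) (a : ℕ → Polynomial ℝ)
    (hb0 : b 0 = (d 1)⁻¹)
    (ha0 : a 0 = Polynomial.C (d 1)⁻¹ * (Polynomial.X * m 1 - Polynomial.C (l 1)⁻¹))
    (hb : ∀ j, 1 ≤ j → j ≤ N - 1 → b j = ((l j) ^ 2 * d j * d (j + 1))⁻¹)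
    (ha : ∀ j, 1 ≤ j → j ≤ N - 1 → a j =
      Polynomial.C (d (j + 1))⁻¹ *
        (Polynomial.X * m (j + 1) - Polynomial.C ((l j)⁻¹ + (l (j + 1))⁻¹)))
    (P Q : ℕ → Polynomial ℝ)
    (hP0 : P 0 = 0) (hP1 : P 1 = 1) (hQ0 : Q 0 = -1) (hQ1 : Q 1 = 0)
    (hPrec : ∀ j, j ≤ N - 1 → P (j + 2) = a j * P (j + 1) - Polynomial.C (b j) * P j)
    (hQrec : ∀ j, j ≤ N - 1 → Q (j + 2) = a j * Q (j + 1) - Polynomial.C (b j) * Q j)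
    (hPn0 : ∀ j, j ≤ N → (P (j + 1)).eval 0 ≠ 0)
    (Pp Qp : ℕ → Polynomial ℝ)
    (hPp0 : Pp 0 = 0) (hPp1 : Pp 1 = 1) (hQp0 : Qp 0 = 1) (hQp1 : Qp 1 = 0)
    (hPpodd : ∀ i, 1 ≤ i → i ≤ N → Pp (2 * i) =
      Polynomial.C (-(∏ t ∈ Finset.range i, b t)⁻¹) *
        (P (i + 1) * Polynomial.C ((P i).eval 0) - P i * Polynomial.C ((P (i + 1)).eval 0)))
    (hPpeven : ∀ i, 1 ≤ i → i ≤ N → Pp (2 * i + 1) =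
      Polynomial.C ((P (i + 1)).eval 0)⁻¹ * P (i + 1))
    (hQpodd : ∀ i, 1 ≤ i → i ≤ N → Qp (2 * i) =
      Polynomial.C (∏ t ∈ Finset.range i, b t)⁻¹ *
        (Q (i + 1) * Polynomial.C ((P i).eval 0) - Q i * Polynomial.C ((P (i + 1)).eval 0)))
    (hQpeven : ∀ i, 1 ≤ i → i ≤ N → Qp (2 * i + 1) =
      -(Polynomial.C ((P (i + 1)).eval 0)⁻¹ * Q (i + 1))) :
    ∀ i, 1 ≤ i → i ≤ N →
      (Pp (2 * i) = -(Polynomial.X * m i) * Pp (2 * i - 1) + Pp (2 * i - 2) ∧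
        Pp (2 * i + 1) = Polynomial.C (l i) * Pp (2 * i) + Pp (2 * i - 1)) ∧
      (Qp (2 * i) = -(Polynomial.X * m i) * Qp (2 * i - 1) + Qp (2 * i - 2) ∧
        Qp (2 * i + 1) = Polynomial.C (l i) * Qp (2 * i) + Qp (2 * i - 1)) :=
  stieltjes_polynomials_solve_difference_system_general N m l d hd0 hl0 b a hb0 ha0 hb ha P Q hP0
    hP1 hQ0 hQ1 hPrec hQrec Pp Qp hPp0 hPp1 hQp0 hQp1 hPpodd hPpeven hQpodd hQpeven

end
end

section
/- Let s = (s_j)_{j=0}^{2ν−2} be a real sequence with s_0 = ⋯ = s_{ν−2} = 0 and s_{ν−1} ≠ 0. Then: (1) det S_i = 0 for 1 ≤ i ≤ ν−1, while det S_ν ≠ 0 and det S_{ν−1}^+ ≠ 0 (so ν is the first normal index of s); (2) (−1)^{ν+1}·det S_{ν−1}^+ / det S_ν = 1/s_{ν−1}; (3) ν_−(S_ν) = ⌊(ν+1)/2⌋ if ν is odd and s_{ν−1} < 0, and ν_−(S_ν) = ⌊ν/2⌋ otherwise; (4) ν_−(S_{ν−1}^+) = ⌊ν/2⌋ if ν is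 even and s_{ν−1} < 0, and ν_−(S_{ν−1}^+) = ⌊(ν−1)/2⌋ otherwise. -/
open Polynomial Matrix Finset

noncomputable section

/-! If `s_j = 0` for `j ≤ ν - 2`, then `S_ν` vanishes above its antidiagonal, all of whose
entries equal `a = s_{ν-1}`, and `S_{ν-1}^+` is the matrix of the same shape built from the
shifted sequence. Expanding along the first row gives `det = (-1)^{n(n-1)/2} a^n` for such a
matrix of size `n`, which yields (1) and (2).

For the inertia, the quadratic form of such a matrix vanishes on the span of the first `⌊n/2⌋`
coordinate vectors. Since the form is nondegenerate, Sylvester's law of inertia gives at least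
`⌊n/2⌋` positive and `⌊n/2⌋` negative eigenvalues. This determines `ν_-` when `n` is even; when
`n` is odd, the sign of the determinant, which is `(-1)^{ν_-}`, decides the sign of the one
remaining eigenvalue. -/

theorem neg_one_pow_card_neg_mul_prod_pos {ι R : Type*} [CommRing R] [LinearOrder R]
    [IsStrictOrderedRing R] (s : Finset ι) {f : ι → R} (hf : ∀ i ∈ s, f i ≠ 0) :
    0 < (-1) ^ #{i ∈ s | f i < 0} * ∏ i ∈ s, f i := by
  have hneg := prod_neg (s := {i ∈ s | f i < 0}) fun i => -f i
  simp only [neg_neg] at hneg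
  rw [← prod_filter_mul_prod_filter_not s fun i => f i < 0, hneg, ← mul_assoc, ← mul_assoc,
    ← pow_add, Even.neg_one_pow ⟨_, rfl⟩, one_mul]
  refine mul_pos (prod_pos fun i hi => neg_pos.mpr (mem_filter.mp hi).2) (prod_pos fun i hi => ?_)
  obtain ⟨his, hi⟩ := mem_filter.mp hi
  exact (not_lt.mp hi).lt_of_ne' (hf i his)

namespace QuadraticForm

variable {𝕜 M : Type*} [Field 𝕜] [LinearOrder 𝕜] [IsStrictOrderedRing 𝕜] [AddCommGroup M]
  [Module 𝕜 M] [FiniteDimensional 𝕜 M] {Q : QuadraticForm 𝕜 M} {V : Subspace 𝕜 M}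

lemma sigNeg_add_finrank_le_of_nonneg (hV : ∀ x ∈ V, 0 ≤ Q x) :
    sigNeg Q + Module.finrank 𝕜 V ≤ Module.finrank 𝕜 M := by
  simpa using sigPos_add_finrank_le_of_nonpos (Q := -Q) (V := V) (by simpa using hV)

lemma finrank_le_sigNeg_of_isotropic (hQ : Module.finrank 𝕜 Q.radical = 0)
    (hV : ∀ x ∈ V, Q x = 0) : Module.finrank 𝕜 V ≤ sigNeg Q := by
  have hpos := sigPos_add_finrank_le_of_nonpos fun x hx => (hV x hx).le
  have := sigPos_add_sigNeg_add_radical (Q := Q)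
  omega

end QuadraticForm

namespace Matrix.IsHermitian

open QuadraticMap

section

variable {n : Type*} [Fintype n] [DecidableEq n] {A : Matrix n n ℝ}

theorem equivalent_weightedSumSquares (hA : A.IsHermitian) :
    A.toQuadraticForm'.Equivalent (weightedSumSquares ℝ hA.eigenvalues) := by
  let U := hA.eigenvectorUnitary
  suffices h : A.toQuadraticForm'.comp (UnitaryGroup.toLinearEquiv U : (n → ℝ) →ₗ[ℝ] n → ℝ) =
      weightedSumSquares ℝ hA.eigenvalues from h ▸ ⟨isometryEquivOfCompLinearEquiv _ _⟩
  have hD : (U : Matrix n n ℝ)ᵀ * A * U = diagonal hA.eigenvalues := by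
    simpa [Unitary.conjStarAlgAut_apply, star_eq_conjTranspose]
      using hA.conjStarAlgAut_star_eigenvectorUnitary
  ext y
  rw [weightedSumSquares_apply]
  simp only [QuadraticMap.comp_apply, toQuadraticForm', LinearMap.BilinMap.toQuadraticMap_apply,
    toLinearMap₂'_apply']
  change (U : Matrix n n ℝ) *ᵥ y ⬝ᵥ A *ᵥ ((U : Matrix n n ℝ) *ᵥ y) = _
  rw [dotProduct_mulVec, ← vecMul_transpose, vecMul_vecMul, vecMul_transpose, dotProduct_mulVec,
    vecMul_vecMul, hD]
  simp only [vecMul_diagonal, dotProduct, smul_eq_mul]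
  exact sum_congr rfl fun i _ => by ring

theorem eigenvalues_ne_zero (hA : A.IsHermitian) (hdet : A.det ≠ 0) (i : n) :
    hA.eigenvalues i ≠ 0 := by
  intro hi
  apply hdet
  rw [hA.det_eq_prod_eigenvalues]
  exact prod_eq_zero (mem_univ i) (by simp [hi])

theorem finrank_radical_eq_zero (hA : A.IsHermitian) (hdet : A.det ≠ 0) :
    Module.finrank ℝ A.toQuadraticForm'.radical = 0 := by
  rw [hA.equivalent_weightedSumSquares.rank_radical_eq, QuadraticForm.radical_weightedSumSquares,
    Pi.dim_spanSubset, Set.ncard_eq_zero]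
  exact Set.eq_empty_of_forall_notMem (hA.eigenvalues_ne_zero hdet)

end

variable {n : ℕ} {A : Matrix (Fin n) (Fin n) ℝ}

theorem nuNeg_eq_card_eigenvalues_neg (hA : A.IsHermitian) :
    nuNeg A = #{i | hA.eigenvalues i < 0} := by
  rw [nuNeg, hA.roots_charpoly_eq_eigenvalues, Multiset.filter_map, Multiset.card_map]
  rfl

theorem nuNeg_eq_sigNeg (hA : A.IsHermitian) : nuNeg A = sigNeg A.toQuadraticForm' := by
  rw [hA.nuNeg_eq_card_eigenvalues_neg,
    QuadraticForm.sigNeg_of_equiv_weightedSumSquares hA.equivalent_weightedSumSquares,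
    Set.ncard_eq_toFinset_card']
  simp

theorem neg_one_pow_nuNeg_mul_det_pos (hA : A.IsHermitian) (hdet : A.det ≠ 0) :
    0 < (-1) ^ nuNeg A * A.det := by
  rw [hA.det_eq_prod_eigenvalues, hA.nuNeg_eq_card_eigenvalues_neg]
  simpa using neg_one_pow_card_neg_mul_prod_pos univ fun i _ => hA.eigenvalues_ne_zero hdet i

theorem nuNeg_mem_Icc_of_isotropic (hA : A.IsHermitian) (hdet : A.det ≠ 0)
    {V : Submodule ℝ (Fin n → ℝ)} (hV : ∀ v ∈ V, A.toQuadraticForm' v = 0) :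
    nuNeg A ∈ Set.Icc (Module.finrank ℝ V) (n - Module.finrank ℝ V) := by
  have hlo := QuadraticForm.finrank_le_sigNeg_of_isotropic (hA.finrank_radical_eq_zero hdet) hV
  have hhi := QuadraticForm.sigNeg_add_finrank_le_of_nonneg fun v hv => (hV v hv).ge
  rw [← hA.nuNeg_eq_sigNeg] at hlo hhi
  rw [Module.finrank_fin_fun] at hhi
  exact ⟨hlo, Nat.le_sub_of_add_le hhi⟩

end Matrix.IsHermitian

theorem isHermitian_hankelM (t : ℕ → ℝ) (n : ℕ) : (hankelM t n).IsHermitian :=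
  Matrix.ext fun i j => by simp [hankelM, add_comm]

theorem hankelMp_eq_hankelM_shift (s : ℕ → ℝ) (n : ℕ) :
    hankelMp s n = hankelM (fun m => s (m + 1)) n :=
  rfl

-- `ha` says `t (n - 1) = a` without truncated subtraction, so that it is vacuous for `n = 0`.
theorem det_hankelM_of_antitriangular {t : ℕ → ℝ} {a : ℝ} {n : ℕ}
    (ht : ∀ m, m + 2 ≤ n → t m = 0) (ha : ∀ m, m + 1 = n → t m = a) :
    (hankelM t n).det = (-1) ^ (n * (n - 1) / 2) * a ^ n := by
  induction n generalizing t with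
  | zero => simp
  | succ n ih =>
    have hminor : (hankelM t (n + 1)).submatrix Fin.succ (Fin.last n).succAbove =
        hankelM (fun m => t (m + 1)) n := by
      ext i j
      simp only [hankelM, Fin.succAbove_last, submatrix_apply, of_apply, Fin.val_succ,
        Fin.val_castSucc]
      rw [add_right_comm]
    rw [det_succ_row_zero, sum_eq_single (Fin.last n), hminor,
      ih (fun m hm => ht _ (by omega)) (fun m hm => ha _ (by omega)), Nat.triangle_succ]
    · simp only [hankelM, of_apply, Fin.val_last, Fin.val_zero, zero_add, ha n rfl]
      ring
    · intro j _ hj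
      simp [hankelM, ht j (by have := Fin.val_lt_last hj; omega)]
    · simp

theorem toQuadraticForm'_hankelM_eq_zero {t : ℕ → ℝ} {n : ℕ} (ht : ∀ m, m + 2 ≤ n → t m = 0)
    {v : Fin n → ℝ} (hv : v ∈ Pi.spanSubset ℝ {i : Fin n | (i : ℕ) < n / 2}) :
    (hankelM t n).toQuadraticForm' v = 0 := by
  rw [Pi.mem_spanSubset_iff] at hv
  simp only [toQuadraticForm', LinearMap.BilinMap.toQuadraticMap_apply, toLinearMap₂'_apply]
  refine sum_eq_zero fun i _ => sum_eq_zero fun j _ => ?_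
  by_cases hi : (i : ℕ) < n / 2
  · by_cases hj : (j : ℕ) < n / 2
    · simp [hankelM, ht (i + j) (by omega)]
    · simp [hv j hj]
  · simp [hv i hi]

theorem finrank_spanSubset_fin_val_lt {n k : ℕ} (hk : k ≤ n) :
    Module.finrank ℝ (Pi.spanSubset ℝ {i : Fin n | (i : ℕ) < k}) = k := by
  rw [Pi.dim_spanSubset, ← Fin.range_castLE hk,
    Set.ncard_range_of_injective (Fin.castLE_injective hk), Nat.card_eq_fintype_card,
    Fintype.card_fin]

theorem nuNeg_hankelM_of_antitriangular {t : ℕ → ℝ} {a : ℝ} {n : ℕ}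
    (ht : ∀ m, m + 2 ≤ n → t m = 0) (ha : ∀ m, m + 1 = n → t m = a) (ha0 : a ≠ 0) :
    nuNeg (hankelM t n) = if Odd n ∧ a < 0 then (n + 1) / 2 else n / 2 := by
  have hA := isHermitian_hankelM t n
  have hdet := det_hankelM_of_antitriangular ht ha
  have hdet0 : (hankelM t n).det ≠ 0 := by simp [hdet, ha0]
  have hbounds := hA.nuNeg_mem_Icc_of_isotropic hdet0 fun v hv =>
    toQuadraticForm'_hankelM_eq_zero ht hv
  rw [finrank_spanSubset_fin_val_lt (Nat.div_le_self n 2), Set.mem_Icc] at hbounds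
  rcases Nat.even_or_odd' n with ⟨m, rfl | rfl⟩
  · rw [if_neg fun h => (Nat.not_odd_iff_even.mpr (even_two_mul m)) h.1]
    omega
  have hodd : Odd (2 * m + 1) := odd_two_mul_add_one m
  obtain ⟨δ, hδ, hN⟩ : ∃ δ ≤ 1, nuNeg (hankelM t (2 * m + 1)) = m + δ :=
    ⟨nuNeg (hankelM t (2 * m + 1)) - m, by omega, by omega⟩
  have hexp : (2 * m + 1) * (2 * m + 1 - 1) / 2 = m * (2 * m + 1) := by
    rw [Nat.add_sub_cancel, mul_comm, mul_assoc, Nat.mul_div_cancel_left _ two_pos]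
  have hsign := hA.neg_one_pow_nuNeg_mul_det_pos hdet0
  rw [hdet, hN, hexp, ← mul_assoc, ← pow_add,
    show m + δ + m * (2 * m + 1) = δ + 2 * (m * m + m) by ring, pow_add, pow_mul, neg_one_sq,
    one_pow, mul_one] at hsign
  interval_cases δ
  · have : 0 < a := hodd.pow_pos_iff.mp (by simpa using hsign)
    rw [if_neg fun h => this.not_gt h.2]
    omega
  · have : a < 0 := hodd.pow_neg_iff.mp (by linarith)
    rw [if_pos ⟨hodd, this⟩]
    omega

/-- Facts about the first normal index of a sequence with
`s_0 = ⋯ = s_{ν-2} = 0`, `s_{ν-1} ≠ 0`. -/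
theorem first_normal_index_facts
    (ν : ℕ) (hν : 1 ≤ ν) (s : ℕ → ℝ)
    (hzero : ∀ j, j + 2 ≤ ν → s j = 0) (hsν : s (ν - 1) ≠ 0) :
    ((∀ i, 1 ≤ i → i + 1 ≤ ν → Matrix.det (hankelM s i) = 0) ∧
      Matrix.det (hankelM s ν) ≠ 0 ∧ Matrix.det (hankelMp s (ν - 1)) ≠ 0) ∧
    ((-1 : ℝ) ^ (ν + 1) * Matrix.det (hankelMp s (ν - 1)) / Matrix.det (hankelM s ν) =
      (s (ν - 1))⁻¹) ∧
    (nuNeg (hankelM s ν) =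
      if Odd ν ∧ s (ν - 1) < 0 then (ν + 1) / 2 else ν / 2) ∧
    (nuNeg (hankelMp s (ν - 1)) =
      if Even ν ∧ s (ν - 1) < 0 then ν / 2 else (ν - 1) / 2) := by
  obtain ⟨n, rfl⟩ := Nat.exists_eq_add_of_le' hν
  rw [Nat.add_sub_cancel] at hsν ⊢
  have hshift : ∀ m, m + 2 ≤ n → s (m + 1) = 0 := fun m hm => hzero _ (by omega)
  have hdiag : ∀ m, m + 1 = n + 1 → s m = s n := fun m hm => congrArg s (by omega)
  have hdet := det_hankelM_of_antitriangular hzero hdiag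
  have hdetp : (hankelMp s n).det = (-1) ^ (n * (n - 1) / 2) * s n ^ n := by
    rw [hankelMp_eq_hankelM_shift, det_hankelM_of_antitriangular hshift fun m hm => by rw [hm]]
  refine ⟨⟨fun i hi hin => ?_, by simp [hdet, hsν], by simp [hdetp, hsν]⟩, ?_,
    nuNeg_hankelM_of_antitriangular hzero hdiag hsν, ?_⟩
  · rw [det_hankelM_of_antitriangular (a := 0) (fun m hm => hzero m (by omega))
      fun m hm => hzero m (by omega)]
    simp [zero_pow (by omega : i ≠ 0)]
  · rw [hdet, hdetp, Nat.triangle_succ, pow_add]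
    field_simp
    ring
  · rw [hankelMp_eq_hankelM_shift,
      nuNeg_hankelM_of_antitriangular hshift (fun m hm => by rw [hm]) hsν]
    simp [Nat.even_add_one]

end
end
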